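/- Let μ and ν be Borel probability measures on ℝ² with all absolute moments finite (∫ ‖b‖^n dμ < ∞ and ∫ ‖b‖^n dν < ∞ for every n ∈ ℕ). Assume μ is determined by its moments, in the sense that any Borel probability measure on ℝ² having the same mixed moments ∫ b₀^j b₁^k as μ for all j, k ∈ ℕ equals μ. If φ_μ(t, t w) = φ_ν(t, t w) for all t ∈ ℝ and all w ∈ [0, 1], then μ = ν. -/

import Mathlib

open MeasureTheory Complex Polynomial

/-!
For each `w`, the hypothesis says that the laws of `b₀ + w b₁` under `μ` and `ν` have the same
characteristic function, hence coincide, so `μ` and `ν` give the same moments to `b₀ + w b₁`.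
By the binomial formula the `n`-th such moment is a polynomial in `w` whose `k`-th coefficient
is `(n choose k) ∫ b₀ ^ (n - k) b₁ ^ k`; agreeing on the infinite set `[0, 1]`, the two polynomials
are equal, so all mixed moments of `μ` and `ν` agree and moment determinacy gives `μ = ν`.
-/

theorem MeasureTheory.Measure.map_eq_of_integral_exp_eq {α : Type*} [MeasurableSpace α]
    {μ ν : Measure α} [IsFiniteMeasure μ] [IsFiniteMeasure ν] {f : α → ℝ} (hf : Measurable f)
    (h : ∀ t : ℝ, ∫ a, exp (I * ((t * f a : ℝ) : ℂ)) ∂μ = ∫ a, exp (I * ((t * f a : ℝ) : ℂ)) ∂ν) :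
    μ.map f = ν.map f := by
  refine Measure.ext_of_charFun (funext fun t => ?_)
  rw [charFun_apply_real, charFun_apply_real, integral_map hf.aemeasurable (by fun_prop),
    integral_map hf.aemeasurable (by fun_prop)]
  simpa only [ofReal_mul, mul_comm I] using h t

lemma integrable_fst_pow_mul_snd_pow {ρ : Measure (ℝ × ℝ)} {j k : ℕ}
    (h : Integrable (fun b : ℝ × ℝ => ‖b‖ ^ (j + k)) ρ) :
    Integrable (fun b : ℝ × ℝ => b.1 ^ j * b.2 ^ k) ρ := by
  refine h.mono (by fun_prop) (Filter.Eventually.of_forall fun b => ?_)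
  rw [norm_mul, norm_pow, norm_pow, norm_pow, norm_norm, pow_add]
  exact mul_le_mul (pow_le_pow_left₀ (norm_nonneg _) (norm_fst_le b) j)
    (pow_le_pow_left₀ (norm_nonneg _) (norm_snd_le b) k) (by positivity) (by positivity)

noncomputable def mixedMomentPoly (ρ : Measure (ℝ × ℝ)) (n : ℕ) : ℝ[X] :=
  ∑ k ∈ Finset.range (n + 1), C (n.choose k * ∫ b, b.1 ^ (n - k) * b.2 ^ k ∂ρ) * X ^ k

lemma coeff_mixedMomentPoly (ρ : Measure (ℝ × ℝ)) {n k : ℕ} (hk : k ≤ n) :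
    (mixedMomentPoly ρ n).coeff k = n.choose k * ∫ b, b.1 ^ (n - k) * b.2 ^ k ∂ρ := by
  simp only [mixedMomentPoly, finsetSum_coeff, coeff_C_mul_X_pow]
  rw [Finset.sum_ite_eq, if_pos (Finset.mem_range_succ_iff.mpr hk)]

lemma eval_mixedMomentPoly {ρ : Measure (ℝ × ℝ)} {n : ℕ}
    (hρ : Integrable (fun b : ℝ × ℝ => ‖b‖ ^ n) ρ) (w : ℝ) :
    (mixedMomentPoly ρ n).eval w = ∫ b, (b.1 + w * b.2) ^ n ∂ρ := by
  have hint : ∀ k ∈ Finset.range (n + 1),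
      Integrable (fun b : ℝ × ℝ => w ^ k * (n.choose k * (b.1 ^ (n - k) * b.2 ^ k))) ρ := by
    intro k hk
    have hnk : n - k + k = n := Nat.sub_add_cancel (Finset.mem_range_succ_iff.mp hk)
    exact ((integrable_fst_pow_mul_snd_pow (by rwa [hnk])).const_mul _).const_mul _
  have hexpand : ∀ b : ℝ × ℝ, (b.1 + w * b.2) ^ n
      = ∑ k ∈ Finset.range (n + 1), w ^ k * (n.choose k * (b.1 ^ (n - k) * b.2 ^ k)) := by
    intro b
    rw [add_comm, add_pow]
    exact Finset.sum_congr rfl fun k _ => by ring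
  simp only [hexpand, integral_finsetSum _ hint, integral_const_mul, mixedMomentPoly,
    eval_finsetSum, eval_mul, eval_C, eval_pow, eval_X]
  exact Finset.sum_congr rfl fun k _ => by ring

/-- Identification under moment determinacy: if `μ` has all absolute moments finite and is
determined by its moments, and `φ_μ(t, tw) = φ_ν(t, tw)` for all `t ∈ ℝ`, `w ∈ [0,1]`,
then `μ = ν`. -/
theorem stmt_12 (μ ν : Measure (ℝ × ℝ)) [IsProbabilityMeasure μ] [IsProbabilityMeasure ν]
    (hμm : ∀ n : ℕ, Integrable (fun b : ℝ × ℝ => ‖b‖ ^ n) μ)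
    (hνm : ∀ n : ℕ, Integrable (fun b : ℝ × ℝ => ‖b‖ ^ n) ν)
    (hdet : ∀ ρ : Measure (ℝ × ℝ), IsProbabilityMeasure ρ →
      (∀ n : ℕ, Integrable (fun b : ℝ × ℝ => ‖b‖ ^ n) ρ) →
      (∀ j k : ℕ, ∫ b : ℝ × ℝ, b.1 ^ j * b.2 ^ k ∂ρ = ∫ b : ℝ × ℝ, b.1 ^ j * b.2 ^ k ∂μ) →
      ρ = μ)
    (h : ∀ t : ℝ, ∀ w ∈ Set.Icc (0 : ℝ) 1,
      ∫ b : ℝ × ℝ, Complex.exp (Complex.I * ((t * b.1 + (t * w) * b.2 : ℝ) : ℂ)) ∂μ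
        = ∫ b : ℝ × ℝ, Complex.exp (Complex.I * ((t * b.1 + (t * w) * b.2 : ℝ) : ℂ)) ∂ν) :
    μ = ν := by
  have hmoment : ∀ w ∈ Set.Icc (0 : ℝ) 1, ∀ n : ℕ,
      ∫ b, (b.1 + w * b.2) ^ n ∂μ = ∫ b, (b.1 + w * b.2) ^ n ∂ν := by
    intro w hw n
    have hf : Measurable fun b : ℝ × ℝ => b.1 + w * b.2 := by fun_prop
    have hmap : μ.map (fun b => b.1 + w * b.2) = ν.map (fun b => b.1 + w * b.2) :=
      Measure.map_eq_of_integral_exp_eq hf fun t => by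
        simpa only [mul_add, mul_assoc] using h t w hw
    have hg : ∀ ρ : Measure ℝ, AEStronglyMeasurable (fun x : ℝ => x ^ n) ρ := fun _ => by fun_prop
    simpa only [integral_map hf.aemeasurable (hg _)] using congrArg (∫ x, x ^ n ∂·) hmap
  have hpoly : ∀ n, mixedMomentPoly μ n = mixedMomentPoly ν n := fun n =>
    eq_of_infinite_eval_eq _ _ <| (Set.Icc_infinite zero_lt_one).mono fun w hw => by
      rw [Set.mem_ofPred_eq, eval_mixedMomentPoly (hμm n), eval_mixedMomentPoly (hνm n)]
      exact hmoment w hw n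
  refine (hdet ν inferInstance hνm fun j k => ?_).symm
  have hcoeff := congrArg (coeff · k) (hpoly (j + k))
  have hkn : k ≤ j + k := Nat.le_add_left k j
  simp only [coeff_mixedMomentPoly _ hkn, Nat.add_sub_cancel] at hcoeff
  exact (mul_left_cancel₀ (Nat.cast_ne_zero.mpr (Nat.choose_pos hkn).ne') hcoeff).symm
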